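/- Let X : Fin n → Matrix (Fin D) (Fin D) ℂ be positive semidefinite matrices. Then the height 𝔥(X), defined as the infimum of the real traces of Hermitian matrices H with H − X i positive semidefinite for all i, satisfies the semidefinite-programming duality: 𝔥(X) = sSup { ∑ i, Re (Matrix.trace (X i * Y i)) | Y is an n-outcome measurement on ℂ^D, i.e., Y : Fin n → Matrix (Fin D) (Fin D) ℂ with each Y i positive semidefinite and ∑ i, Y i = 1 }. -/

import Mathlib

/-!
Weak duality: for a measurement `Y` and a feasible `H`,
`tr H = ∑ tr (X i Y i) + ∑ tr ((H - X i) Y i)` and the last sum is nonnegative.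

For the converse let `p` be the height. The pairs `(r, Z)` for which some Hermitian `H` with
`tr H < r` satisfies `H - X i + Z i > 0` for all `i` form an open convex set not containing
`(p, 0)`, so Hahn–Banach separates them by a functional `(r, Z) ↦ γ r + ∑ Re tr (Y i Z i)`.
Slater's point `∑ X j + 1` forces `γ > 0`, and after normalising `γ = 1`: the set is monotone in
each `Z i`, so every `Y i` is positive semidefinite; testing `Z i = X i - H` shows that
`H ↦ Re tr ((1 - ∑ Y i) H)` is bounded below on Hermitian matrices, so `∑ Y i = 1` and `Y` is a
measurement of value at least `p`. Hence the supremum is attained and equals the height.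

With no outcomes both sides are `0` by the junk conventions of `sInf` and `sSup`: the traces of
feasible `H` are unbounded below (or just `0`), and there is no measurement (or only the empty one
on `0 × 0` matrices).
-/

open Matrix
open scoped Kronecker ComplexOrder

noncomputable section

/-- A measurement (POVM): a finite family of positive semidefinite matrices summing to `1`. -/
def IsMeasurement {ι κ : Type*} [Fintype ι] [DecidableEq ι] [Fintype κ]
    (A : κ → Matrix ι ι ℂ) : Prop :=
  (∀ x, (A x).PosSemidef) ∧ ∑ x, A x = 1

/-- `A` is a post-processing of `B`: `A ⪯ B`. -/
def PostProc {ι : Type*} {n m : ℕ}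
    (A : Fin n → Matrix ι ι ℂ) (B : Fin m → Matrix ι ι ℂ) : Prop :=
  ∃ μ : Fin n → Fin m → ℝ,
    (∀ x y, 0 ≤ μ x y) ∧ (∀ y, ∑ x, μ x y = 1) ∧
    (∀ x, A x = ∑ y, (μ x y : ℂ) • B y)

/-- The outer product `|E⟩⟨F|` of the vectorizations of two matrices. -/
def outerProd {ι : Type*} (E F : Matrix ι ι ℂ) : Matrix (ι × ι) (ι × ι) ℂ :=
  Matrix.of fun p q => E p.1 p.2 * star (F q.1 q.2)

/-- The (un-normalized) Fisher information map of a measurement. -/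
noncomputable def Fisher {ι κ : Type*} [Fintype ι] [Fintype κ]
    (A : κ → Matrix ι ι ℂ) : Matrix (ι × ι) (ι × ι) ℂ :=
  ∑ x, (Matrix.trace (A x))⁻¹ • outerProd (A x) (A x)

/-- The generalized Fisher information map of a measurement, relative to a
positive definite state `ρ` (with positive semidefinite square root `ρ^{1/2}`). -/
noncomputable def FisherRho {ι κ : Type*} [Fintype ι] [DecidableEq ι] [Fintype κ]
    {ρ : Matrix ι ι ℂ} (hρ : ρ.PosDef) (A : κ → Matrix ι ι ℂ) :
    Matrix (ι × ι) (ι × ι) ℂ :=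
  ∑ x, (Matrix.trace (ρ * A x))⁻¹ •
    outerProd (((hρ.posSemidef.1.eigenvectorUnitary : Matrix ι ι ℂ) * diagonal ((↑) ∘ (√·) ∘ hρ.posSemidef.1.eigenvalues) *
      (star hρ.posSemidef.1.eigenvectorUnitary : Matrix ι ι ℂ)) * A x)
      (((hρ.posSemidef.1.eigenvectorUnitary : Matrix ι ι ℂ) * diagonal ((↑) ∘ (√·) ∘ hρ.posSemidef.1.eigenvalues) *
      (star hρ.posSemidef.1.eigenvectorUnitary : Matrix ι ι ℂ)) * A x)

/-- The height of a finite family of self-adjoint matrices: the infimum of the traces of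
Hermitian matrices dominating every member in the Loewner order. -/
noncomputable def height {ι κ : Type*} [Fintype ι] [Fintype κ]
    (X : κ → Matrix ι ι ℂ) : ℝ :=
  sInf { t : ℝ | ∃ H : Matrix ι ι ℂ, H.IsHermitian ∧
    (∀ i, (H - X i).PosSemidef) ∧ t = (Matrix.trace H).re }

open scoped ComplexStarModule Topology

namespace Matrix

lemma PosSemidef.pi_single {ι κ R : Type*} [Ring R] [PartialOrder R] [StarRing R] [DecidableEq κ]
    {P : Matrix ι ι R} (hP : P.PosSemidef)
    (i j : κ) : ((Pi.single i P : κ → Matrix ι ι R) j).PosSemidef := by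
  rcases eq_or_ne j i with rfl | h
  · simpa using hP
  · simpa [h] using PosSemidef.zero

lemma posDef_sum_add_one_sub {ι κ 𝕜 : Type*} [Fintype κ] [DecidableEq ι] [RCLike 𝕜]
    {X : κ → Matrix ι ι 𝕜} (hX : ∀ i, (X i).PosSemidef) (i : κ) :
    (∑ j, X j + 1 - X i).PosDef := by
  classical
  rw [← Finset.add_sum_erase _ _ (Finset.mem_univ i), add_sub_right_comm, add_sub_cancel_left,
    add_comm]
  exact PosDef.one.add_posSemidef (posSemidef_sum _ fun j _ => hX j)

variable {ι 𝕜 : Type*} [Fintype ι] [RCLike 𝕜]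

lemma trace_mul_vecMulVec_star (A : Matrix ι ι 𝕜) (v : ι → 𝕜) :
    (A * vecMulVec v (star v)).trace = star v ⬝ᵥ A *ᵥ v := by
  rw [mul_vecMulVec, trace_vecMulVec, dotProduct_comm]

lemma PosSemidef.trace_mul_nonneg {A B : Matrix ι ι 𝕜} (hA : A.PosSemidef) (hB : B.PosSemidef) :
    0 ≤ (A * B).trace := by
  obtain ⟨m, v, rfl⟩ := posSemidef_iff_eq_sum_vecMulVec.mp hB
  rw [Finset.mul_sum, trace_sum]
  exact Finset.sum_nonneg fun i _ =>
    trace_mul_vecMulVec_star A (v i) ▸ hA.dotProduct_mulVec_nonneg _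

lemma PosSemidef.re_trace_eq_zero_iff {A : Matrix ι ι 𝕜} (hA : A.PosSemidef) :
    RCLike.re A.trace = 0 ↔ A = 0 := by
  rw [← hA.trace_eq_zero_iff, ← RCLike.re_add_im A.trace, (RCLike.nonneg_iff.1 hA.trace_nonneg).2]
  simp

lemma IsHermitian.posSemidef_of_forall_re_trace_mul_nonneg {Y : Matrix ι ι 𝕜}
    (hY : Y.IsHermitian) (h : ∀ P : Matrix ι ι 𝕜, P.PosSemidef → 0 ≤ RCLike.re (Y * P).trace) :
    Y.PosSemidef := by
  refine .of_dotProduct_mulVec_nonneg hY fun x => RCLike.nonneg_iff.mpr ⟨?_, ?_⟩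
  · simpa [trace_mul_vecMulVec_star] using h _ (posSemidef_vecMulVec_self_star x)
  · exact hY.im_star_dotProduct_mulVec_self x

lemma IsHermitian.eq_zero_of_forall_le_re_trace_mul {T : Matrix ι ι 𝕜} (hT : T.IsHermitian)
    {a : ℝ} (h : ∀ H : Matrix ι ι 𝕜, H.IsHermitian → a ≤ RCLike.re (T * H).trace) : T = 0 := by
  have hpsd : (T * Tᴴ).PosSemidef := posSemidef_self_mul_conjTranspose T
  have hlin (s : ℝ) : a ≤ s * RCLike.re (T * Tᴴ).trace := by
    simpa [trace_smul, hT.eq, RCLike.smul_re] using h (s • T) (hT.smul (IsSelfAdjoint.all s))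
  have hre : RCLike.re (T * Tᴴ).trace = 0 := by
    refine le_antisymm (not_lt.1 fun hpos => ?_) (RCLike.nonneg_iff.1 hpsd.trace_nonneg).1
    have := hlin ((a - 1) / RCLike.re (T * Tᴴ).trace)
    rw [div_mul_cancel₀ _ hpos.ne'] at this
    linarith
  exact self_mul_conjTranspose_eq_zero.1 (hpsd.re_trace_eq_zero_iff.1 hre)

lemma isOpen_setOf_forall_sphere_re_pos :
    IsOpen {A : Matrix ι ι 𝕜 | ∀ x ∈ Metric.sphere (0 : ι → 𝕜) 1,
      0 < RCLike.re (star x ⬝ᵥ A *ᵥ x)} := by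
  refine isOpen_iff_eventually.2 fun A hA =>
    (isCompact_sphere 0 1).eventually_forall_of_forall_eventually fun x hx => ?_
  have hc : Continuous fun q : Matrix ι ι 𝕜 × (ι → 𝕜) => RCLike.re (star q.2 ⬝ᵥ q.1 *ᵥ q.2) := by
    fun_prop
  exact hc.continuousAt.eventually (lt_mem_nhds (hA x hx))

lemma IsHermitian.posDef_iff_forall_sphere {A : Matrix ι ι 𝕜} (hA : A.IsHermitian) :
    A.PosDef ↔ ∀ x ∈ Metric.sphere (0 : ι → 𝕜) 1, 0 < RCLike.re (star x ⬝ᵥ A *ᵥ x) := by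
  refine ⟨fun h x hx => h.re_dotProduct_pos (ne_zero_of_mem_sphere one_ne_zero ⟨x, hx⟩),
    fun h => posDef_iff_dotProduct_mulVec.2 ⟨hA, fun x hx =>
      RCLike.pos_iff.2 ⟨?_, hA.im_star_dotProduct_mulVec_self x⟩⟩⟩
  have hn : 0 < ‖x‖⁻¹ := inv_pos.2 (norm_pos_iff.2 hx)
  have := h (‖x‖⁻¹ • x) (by simp [norm_smul, inv_mul_cancel₀ (norm_ne_zero_iff.2 hx)])
  simp only [mulVec_smul, dotProduct_smul, star_smul, smul_dotProduct, RCLike.smul_re,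
    star_trivial] at this
  exact pos_of_mul_pos_right (pos_of_mul_pos_right this hn.le) hn.le

lemma isOpen_setOf_posDef {T : Type*} [TopologicalSpace T] {g : T → Matrix ι ι 𝕜}
    (hg : Continuous g) (hH : ∀ t, (g t).IsHermitian) : IsOpen {t | (g t).PosDef} := by
  have : {t | (g t).PosDef} = g ⁻¹' {A | ∀ x ∈ Metric.sphere (0 : ι → 𝕜) 1,
      0 < RCLike.re (star x ⬝ᵥ A *ᵥ x)} :=
    Set.ext fun t => (hH t).posDef_iff_forall_sphere
  exact this ▸ isOpen_setOf_forall_sphere_re_pos.preimage hg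

lemma exists_re_trace_mul_eq (φ : Matrix ι ι ℂ →ₗ[ℝ] ℝ) :
    ∃ Y : Matrix ι ι ℂ, ∀ A, (Y * A).trace.re = φ A := by
  let B : LinearMap.BilinForm ℝ (Matrix ι ι ℂ) :=
    (LinearMap.mul ℝ _).compr₂ (Complex.reLm.comp (traceLinearMap ι ℝ ℂ))
  have hB : B.Nondegenerate := .ofSeparatingLeft fun Y hY => self_mul_conjTranspose_eq_zero.1 <|
    (posSemidef_self_mul_conjTranspose Y).re_trace_eq_zero_iff.1 (hY Yᴴ)
  refine ⟨(B.toDual hB).symm φ, fun A => ?_⟩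
  conv_rhs => rw [← LinearEquiv.apply_symm_apply (B.toDual hB) φ, LinearMap.BilinForm.toDual_def]
  rfl

lemma re_trace_realPart_mul {Y A : Matrix ι ι ℂ} (hA : A.IsHermitian) :
    ((ℜ Y : Matrix ι ι ℂ) * A).trace.re = (Y * A).trace.re := by
  have : (Yᴴ * A).trace.re = (Y * A).trace.re := by
    rw [← hA.eq, ← conjTranspose_mul, trace_conjTranspose, trace_mul_comm, hA.eq]
    simp
  simp [realPart_apply_coe, add_mul, trace_add, this, star_eq_conjTranspose]
  ring

lemma exists_isHermitian_re_trace_mul_eq (φ : Matrix ι ι ℂ →ₗ[ℝ] ℝ) :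
    ∃ Y : Matrix ι ι ℂ, Y.IsHermitian ∧ ∀ A, A.IsHermitian → (Y * A).trace.re = φ A := by
  obtain ⟨Y, hY⟩ := exists_re_trace_mul_eq φ
  exact ⟨ℜ Y, (ℜ Y).2, fun A hA => (re_trace_realPart_mul hA).trans (hY A)⟩

end Matrix

lemma le_of_forall_pos_lt_add_mul {a b c : ℝ} (h : ∀ s > 0, a < b + s * c) : a ≤ b := by
  rcases le_or_gt c 0 with hc | hc
  · linarith [h 1 one_pos]
  · refine le_of_forall_pos_lt_add fun ε hε => ?_
    simpa [div_mul_cancel₀ _ hc.ne'] using h (ε / c) (div_pos hε hc)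

lemma nonneg_of_forall_pos_lt_add_mul {a b c : ℝ} (h : ∀ s > 0, a < b + s * c) : 0 ≤ c := by
  by_contra! hc
  have := h ((|b - a| + 1) / -c) (div_pos (by positivity) (neg_pos.2 hc))
  rw [div_mul_eq_mul_div, mul_div_assoc, div_neg, div_self hc.ne] at this
  linarith [le_abs_self (b - a)]

section HeightDuality

variable {ι κ : Type*} [Fintype ι] {X : κ → Matrix ι ι ℂ}

/-- `(r, Z)` lies in this set when some Hermitian `H` with trace below `r` is strictly feasible for
the constraints perturbed by `Z`. Taking real parts makes it open in `ℝ × (κ → Matrix ι ι ℂ)`. -/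
def perturbedEpigraph (X : κ → Matrix ι ι ℂ) : Set (ℝ × (κ → Matrix ι ι ℂ)) :=
  {q | ∃ H : Matrix ι ι ℂ, H.IsHermitian ∧ H.trace.re < q.1 ∧
    ∀ i, (H - X i + ℜ (q.2 i)).PosDef}

lemma mk_mem_perturbedEpigraph {H : Matrix ι ι ℂ} (hH : H.IsHermitian) {r : ℝ}
    (hr : H.trace.re < r) {Z : κ → Matrix ι ι ℂ} (hZ : ∀ i, (Z i).IsHermitian)
    (hpd : ∀ i, (H - X i + Z i).PosDef) : (r, Z) ∈ perturbedEpigraph X :=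
  ⟨H, hH, hr, fun i => by rw [IsSelfAdjoint.coe_realPart (hZ i)]; exact hpd i⟩

lemma convex_perturbedEpigraph : Convex ℝ (perturbedEpigraph X) := by
  refine convex_iff_forall_pos.2 ?_
  rintro q ⟨H, hH, hr, hpd⟩ q' ⟨H', hH', hr', hpd'⟩ a b ha hb hab
  refine ⟨a • H + b • H', (hH.smul (.all a)).add (hH'.smul (.all b)), ?_, fun i => ?_⟩
  · simp only [trace_add, trace_smul, Complex.add_re, Complex.real_smul, Complex.re_ofReal_mul,
      Prod.fst_add, Prod.smul_fst, smul_eq_mul]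
    nlinarith
  · have : a • (H - X i + ℜ (q.2 i) : Matrix ι ι ℂ) + b • (H' - X i + ℜ (q'.2 i)) =
        a • H + b • H' - (a + b) • X i + (a • (ℜ (q.2 i) : Matrix ι ι ℂ) + b • ℜ (q'.2 i)) := by
      module
    rw [hab, one_smul] at this
    convert ((hpd i).smul ha).add ((hpd' i).smul hb) using 1
    rw [this]
    simp

variable [Fintype κ]

lemma isOpen_perturbedEpigraph : IsOpen (perturbedEpigraph X) := by
  refine isOpen_iff_eventually.2 fun q ⟨H, hH, hr, hpd⟩ => ?_
  have hlt : ∀ᶠ q' in 𝓝 q, H.trace.re < q'.1 :=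
    continuous_fst.continuousAt.eventually (lt_mem_nhds hr)
  have hpd' : ∀ᶠ q' in 𝓝 q, ∀ i, (H - X i + ℜ (q'.2 i)).PosDef := by
    refine Filter.eventually_all.2 fun i => ?_
    -- a Hermitian perturbation of the positive definite `H - X i + ℜ (q.2 i)`
    have hcont : Continuous fun q' : ℝ × (κ → Matrix ι ι ℂ) =>
        H - X i + ℜ (q.2 i) + ℜ (q'.2 i - q.2 i) := by
      fun_prop
    have := (isOpen_setOf_posDef hcont fun q' => (hpd i).isHermitian.add (ℜ _).2).mem_nhds
      (by simpa using hpd i)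
    filter_upwards [this] with q' hq'
    simpa [map_sub] using hq'
  filter_upwards [hlt, hpd'] with q' h1 h2 using ⟨H, hH, h1, h2⟩

lemma exists_separating_of_notMem_perturbedEpigraph {p : ℝ} (hp : (p, 0) ∉ perturbedEpigraph X) :
    ∃ γ : ℝ, ∃ Y : κ → Matrix ι ι ℂ, (∀ i, (Y i).IsHermitian) ∧
      ∀ r Z, (r, Z) ∈ perturbedEpigraph X → (∀ i, (Z i).IsHermitian) →
        γ * p < γ * r + ∑ i, (Y i * Z i).trace.re := by
  classical
  obtain ⟨f, hf⟩ :=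
    geometric_hahn_banach_point_open convex_perturbedEpigraph isOpen_perturbedEpigraph hp
  choose Y hYh hY using fun i => exists_isHermitian_re_trace_mul_eq
    (f.toLinearMap ∘ₗ LinearMap.inr ℝ ℝ _ ∘ₗ LinearMap.single ℝ (fun _ => Matrix ι ι ℂ) i)
  have hf' (r : ℝ) (Z : κ → Matrix ι ι ℂ) :
      f (r, Z) = f (1, 0) * r + ∑ i, f (0, Pi.single i (Z i)) := by
    have : ((r, Z) : ℝ × (κ → Matrix ι ι ℂ)) = r • (1, 0) + ∑ i, (0, Pi.single i (Z i)) := by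
      ext <;> simp [Prod.fst_sum, Prod.snd_sum, Finset.univ_sum_single]
    rw [this, map_add, map_smul, map_sum, smul_eq_mul, mul_comm]
  refine ⟨f (1, 0), Y, hYh, fun r Z hrZ hZ => ?_⟩
  have := hf (r, Z) hrZ
  rw [hf' p 0, hf' r Z] at this
  simpa [hY _ _ (hZ _), Prod.mk_zero_zero] using this

lemma height_of_isEmpty [IsEmpty κ] (X : κ → Matrix ι ι ℂ) : height X = 0 := by
  set S := {t : ℝ | ∃ H : Matrix ι ι ℂ, H.IsHermitian ∧
    (∀ i, (H - X i).PosSemidef) ∧ t = (Matrix.trace H).re}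
  have hS : ∀ t ∈ S, ∀ c : ℝ, c * t ∈ S := by
    rintro _ ⟨H, hH, -, rfl⟩ c
    exact ⟨c • H, hH.smul (IsSelfAdjoint.all c), isEmptyElim, by simp [trace_smul]⟩
  by_cases hb : BddBelow S
  · obtain ⟨b, hb⟩ := hb
    have h0 : S = {0} := by
      refine Set.eq_singleton_iff_unique_mem.2 ⟨⟨0, isHermitian_zero, isEmptyElim, by simp⟩,
        fun t ht => by_contra fun ht0 => ?_⟩
      have := hb (hS t ht ((b - 1) / t))
      rw [div_mul_cancel₀ _ ht0] at this
      linarith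
    change sInf S = 0
    rw [h0, csInf_singleton]
  · exact Real.sInf_of_not_bddBelow hb

variable [DecidableEq ι]

lemma isMeasurement_pi_single [DecidableEq κ] (i : κ) :
    IsMeasurement (Pi.single i (1 : Matrix ι ι ℂ)) :=
  ⟨PosSemidef.one.pi_single i, by simp⟩

lemma IsMeasurement.sum_re_trace_mul_le {Y : κ → Matrix ι ι ℂ} (hY : IsMeasurement Y)
    {H : Matrix ι ι ℂ} (hH : ∀ i, (H - X i).PosSemidef) :
    ∑ i, (X i * Y i).trace.re ≤ H.trace.re := by
  have hsplit : H.trace.re = ∑ i, (X i * Y i).trace.re + ∑ i, ((H - X i) * Y i).trace.re := by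
    conv_lhs => rw [← mul_one H, ← hY.2, Finset.mul_sum, trace_sum, Complex.re_sum]
    simp [sub_mul, trace_sub]
  have hslack : ∀ i, 0 ≤ ((H - X i) * Y i).trace.re := fun i =>
    (RCLike.nonneg_iff.1 ((hH i).trace_mul_nonneg (hY.1 i))).1
  linarith [Finset.sum_nonneg fun i (_ : i ∈ Finset.univ) => hslack i]

lemma mem_perturbedEpigraph_of_posSemidef (hX : ∀ i, (X i).PosSemidef) {Z : κ → Matrix ι ι ℂ}
    (hZ : ∀ i, (Z i).PosSemidef) {r : ℝ} (hr : (∑ j, X j + 1).trace.re < r) :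
    (r, Z) ∈ perturbedEpigraph X :=
  mk_mem_perturbedEpigraph ((posSemidef_sum _ fun j _ => hX j).isHermitian.add isHermitian_one) hr
    (fun i => (hZ i).isHermitian) fun i => (posDef_sum_add_one_sub hX i).add_posSemidef (hZ i)

lemma exists_normalized_separating (hX : ∀ i, (X i).PosSemidef) {p : ℝ}
    (hp : ∀ H, H.IsHermitian → (∀ i, (H - X i).PosSemidef) → p ≤ H.trace.re) :
    ∃ Y : κ → Matrix ι ι ℂ, (∀ i, (Y i).IsHermitian) ∧
      ∀ r Z, (r, Z) ∈ perturbedEpigraph X → (∀ i, (Z i).IsHermitian) →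
        p < r + ∑ i, (Y i * Z i).trace.re := by
  have hnot : (p, 0) ∉ perturbedEpigraph X := fun ⟨H, hH, hlt, hpd⟩ =>
    (hp H hH fun i => by simpa using (hpd i).posSemidef).not_gt hlt
  obtain ⟨γ, Y, hYh, hY⟩ := exists_separating_of_notMem_perturbedEpigraph hnot
  have hγ : 0 < γ := by
    set r := max (∑ j, X j + 1).trace.re p + 1
    have := hY r 0 (mem_perturbedEpigraph_of_posSemidef hX (fun _ => PosSemidef.zero)
      (lt_of_le_of_lt (le_max_left _ _) (lt_add_one _))) fun _ => isHermitian_zero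
    have hpr : p < r := lt_of_le_of_lt (le_max_right _ _) (lt_add_one _)
    simp only [Pi.zero_apply, mul_zero, trace_zero, Complex.zero_re, Finset.sum_const_zero,
      add_zero] at this
    nlinarith
  refine ⟨fun i => γ⁻¹ • Y i, fun i => (hYh i).smul (.all _), fun r Z hrZ hZ => ?_⟩
  have := hY r Z hrZ hZ
  have hsum : ∑ i, ((γ⁻¹ • Y i) * Z i).trace.re = γ⁻¹ * ∑ i, (Y i * Z i).trace.re := by
    simp [Finset.mul_sum, trace_smul]
  rw [hsum]
  field_simp
  linarith

theorem exists_isMeasurement_le_sum_re_trace_mul (hX : ∀ i, (X i).PosSemidef) {p : ℝ}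
    (hp : ∀ H, H.IsHermitian → (∀ i, (H - X i).PosSemidef) → p ≤ H.trace.re) :
    ∃ Y, IsMeasurement Y ∧ p ≤ ∑ i, (X i * Y i).trace.re := by
  classical
  obtain ⟨Y, hYh, hY⟩ := exists_normalized_separating hX hp
  have hpsd (i : κ) : (Y i).PosSemidef :=
    (hYh i).posSemidef_of_forall_re_trace_mul_nonneg fun P hP =>
      nonneg_of_forall_pos_lt_add_mul fun s hs => by
        have hZ := (hP.smul hs.le).pi_single i
        simpa [Pi.single_apply, mul_ite, apply_ite, trace_smul] using
          hY _ _ (mem_perturbedEpigraph_of_posSemidef hX hZ (lt_add_one _))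
            fun j => (hZ j).isHermitian
  have hkey (H : Matrix ι ι ℂ) (hH : H.IsHermitian) :
      p - ∑ i, (Y i * X i).trace.re ≤ ((1 - ∑ i, Y i) * H).trace.re := by
    refine le_of_forall_pos_lt_add_mul (c := 1 + ∑ i, (Y i).trace.re) fun δ hδ => ?_
    have hZ (i : κ) : (X i - H + δ • 1).IsHermitian :=
      ((hX i).isHermitian.sub hH).add (isHermitian_one.smul (.all δ))
    have := hY _ _ (mk_mem_perturbedEpigraph hH (lt_add_of_pos_right _ hδ) hZ fun i => by
      rw [show H - X i + (X i - H + δ • 1) = δ • (1 : Matrix ι ι ℂ) by abel]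
      exact PosDef.one.smul hδ) hZ
    simp [mul_add, mul_sub, sub_mul, trace_add, trace_sub, trace_smul, Finset.sum_add_distrib,
      Finset.sum_sub_distrib, Finset.sum_mul, trace_sum, Finset.mul_sum] at this ⊢
    linarith
  have hsum : ∑ i, Y i = 1 := (sub_eq_zero.1 <| IsHermitian.eq_zero_of_forall_le_re_trace_mul
    (isHermitian_one.sub (isSelfAdjoint_sum _ fun i _ => hYh i)) hkey).symm
  refine ⟨Y, ⟨hpsd, hsum⟩, ?_⟩
  simpa [hsum, trace_mul_comm (X _)] using hkey 0 isHermitian_zero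

lemma IsMeasurement.sum_re_trace_mul_le_height (hX : ∀ i, (X i).PosSemidef)
    {Y : κ → Matrix ι ι ℂ} (hY : IsMeasurement Y) : ∑ i, (X i * Y i).trace.re ≤ height X := by
  unfold height
  exact le_csInf ⟨_, _, (posSemidef_sum _ fun j _ => hX j).isHermitian.add isHermitian_one,
      fun i => (posDef_sum_add_one_sub hX i).posSemidef, rfl⟩
    fun _ ⟨_, _, hH, ht⟩ => ht ▸ hY.sum_re_trace_mul_le hH

theorem height_eq_sSup_isMeasurement (hX : ∀ i, (X i).PosSemidef) :
    height X = sSup {t : ℝ | ∃ Y : κ → Matrix ι ι ℂ,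
      IsMeasurement Y ∧ t = ∑ i, (X i * Y i).trace.re} := by
  classical
  rcases isEmpty_or_nonempty κ with hκ | ⟨⟨i₀⟩⟩
  · refine (height_of_isEmpty X).trans (le_antisymm (Real.sSup_nonneg ?_) (Real.sSup_nonpos ?_)) <;>
      rintro _ ⟨Y, -, rfl⟩ <;> simp
  have hbdd : BddBelow {t : ℝ | ∃ H : Matrix ι ι ℂ, H.IsHermitian ∧
      (∀ i, (H - X i).PosSemidef) ∧ t = H.trace.re} :=
    ⟨_, fun _ ⟨_, _, hH, ht⟩ => ht ▸ (isMeasurement_pi_single i₀).sum_re_trace_mul_le hH⟩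
  obtain ⟨Y, hY, hle⟩ := exists_isMeasurement_le_sum_re_trace_mul hX fun H hH hHX =>
    csInf_le hbdd ⟨H, hH, hHX, rfl⟩
  refine (IsGreatest.csSup_eq ⟨?_, ?_⟩).symm
  · exact ⟨Y, hY, hle.antisymm (hY.sum_re_trace_mul_le_height hX)⟩
  · rintro _ ⟨Y', hY', rfl⟩
    exact hY'.sum_re_trace_mul_le_height hX

end HeightDuality

/-- Semidefinite-programming duality for the height function. -/
theorem stmt16 {D n : ℕ} (X : Fin n → Matrix (Fin D) (Fin D) ℂ)
    (hX : ∀ i, (X i).PosSemidef) :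
    height X = sSup { t : ℝ | ∃ Y : Fin n → Matrix (Fin D) (Fin D) ℂ,
      IsMeasurement Y ∧ t = ∑ i, (Matrix.trace (X i * Y i)).re } :=
  height_eq_sSup_isMeasurement hX
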